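/- arXiv:2010.06452 — 6 statements merged into one kernel-verified Lean document; each statement's English description precedes it below -/
import Mathlib

section
/- Let ξ : [y₀, ∞) → ℝ be twice continuously differentiable with ξ(y₀) = 0, ξ(y) > 0 and ξ'(y) > 0 for y > y₀. Suppose there exists y₂ ≥ y₀ such that ξ'' ≤ 0 on [y₀, y₂] and ξ'' > 0 on (y₂, ∞), and suppose (y − y₀ − K)/ξ(y) → −∞ as y → y₀⁺ and → 0 as y → ∞, and is positive at some point. Then for every K ≥ 0 the function k_K(y) = (y − y₀ − K)/ξ(y) on (y₀, ∞) has a unique maximizer ŷ_K, this maximizer lies in [max{y₀ + K, y₂}, ∞), and k_K is strictly decreasing on (ŷ_K, ∞). -/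
/-!
With `c = y₀ + K`, the derivative of `k y = (y - c) / ξ y` is `G y / ξ y ^ 2`, where
`G y = ξ y - (y - c) * ξ' y` has derivative `-(y - c) * ξ'' y`. Since `k → -∞` at `y₀` and
`k → 0` at `∞` while `k` is somewhere positive, `k` attains its maximum at some `m`, where
`k m > 0` forces `m > c` and `G m = 0`. Right of `c` the sign of `G'` is opposite to that of
`ξ''`: if `m < y₂`, then `G ≥ 0` on `[m, y₂]`, so `k` does not decrease there and `y₂` is a
maximizer as well. From a maximizer `m ≥ y₂` on, `G` is strictly decreasing, hence negative,
so `k` is strictly decreasing; this also forces uniqueness of the maximizer.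
-/

open Set Filter Topology

theorem exists_isMaxOn_Ioi_of_tendsto {f : ℝ → ℝ} {a L x : ℝ} (hf : ContinuousOn f (Ioi a))
    (hbot : Tendsto f (𝓝[>] a) atBot) (htop : Tendsto f atTop (𝓝 L)) (hx : a < x)
    (hLx : L < f x) : ∃ m ∈ Ioi a, IsMaxOn f (Ioi a) m := by
  obtain ⟨u, hau, hu⟩ :=
    mem_nhdsGT_iff_exists_Ioo_subset.mp (hbot.eventually (eventually_lt_atBot (f x)))
  obtain ⟨b, hb⟩ := eventually_atTop.mp (htop.eventually_lt_const hLx)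
  obtain ⟨lo, halo, hlo⟩ := exists_between (lt_min hau hx)
  have hxIcc : x ∈ Icc lo (max b x) := ⟨hlo.le.trans (min_le_right _ _), le_max_right _ _⟩
  have hIcc : Icc lo (max b x) ⊆ Ioi a := fun y hy => halo.trans_le hy.1
  obtain ⟨m, hm, hmax⟩ := isCompact_Icc.exists_isMaxOn ⟨x, hxIcc⟩ (hf.mono hIcc)
  have hxm : f x ≤ f m := hmax hxIcc
  refine ⟨m, hIcc hm, fun y (hy : a < y) => ?_⟩
  rcases lt_or_ge y lo with hylo | hylo
  · exact (hu ⟨hy, hylo.trans (hlo.trans_le (min_le_left _ _))⟩).le.trans hxm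
  rcases le_or_gt y (max b x) with hyhi | hyhi
  · exact hmax ⟨hylo, hyhi⟩
  · exact (hb y ((le_max_left _ _).trans hyhi.le)).le.trans hxm

theorem IsMaxOn.le_of_strictAntiOn_Ioi {α β : Type*} [LinearOrder α] [DenselyOrdered α]
    [Preorder β] {f : α → β} {s : Set α} {a b : α} (ha : IsMaxOn f s a)
    (hb : StrictAntiOn f (Ioi b)) (hs : Ioi b ⊆ s) : a ≤ b := by
  by_contra! hba
  obtain ⟨x, hbx, hxa⟩ := exists_between hba
  exact (hb hbx (hbx.trans hxa) hxa).not_ge (ha (hs hbx))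

theorem strictAntiOn_of_forall_hasDerivAt_neg {D : Set ℝ} (hD : Convex ℝ D) {f f' : ℝ → ℝ}
    (hf : ∀ x ∈ D, HasDerivAt f (f' x) x) (hf' : ∀ x ∈ interior D, f' x < 0) :
    StrictAntiOn f D :=
  strictAntiOn_of_hasDerivWithinAt_neg hD (fun x hx => (hf x hx).continuousAt.continuousWithinAt)
    (fun x hx => (hf x (interior_subset hx)).hasDerivWithinAt) hf'

theorem monotoneOn_of_forall_hasDerivAt_nonneg {D : Set ℝ} (hD : Convex ℝ D) {f f' : ℝ → ℝ}
    (hf : ∀ x ∈ D, HasDerivAt f (f' x) x) (hf' : ∀ x ∈ interior D, 0 ≤ f' x) :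
    MonotoneOn f D :=
  monotoneOn_of_hasDerivWithinAt_nonneg hD (fun x hx => (hf x hx).continuousAt.continuousWithinAt)
    (fun x hx => (hf x (interior_subset hx)).hasDerivWithinAt) hf'

def ratioDerivNumerator (ξ ξ' : ℝ → ℝ) (c y : ℝ) : ℝ := ξ y - (y - c) * ξ' y

section Ratio

variable {ξ ξ' ξ'' : ℝ → ℝ} {c y : ℝ}

theorem hasDerivAt_sub_div (hd : HasDerivAt ξ (ξ' y) y) (hξ : ξ y ≠ 0) :
    HasDerivAt (fun y => (y - c) / ξ y) (ratioDerivNumerator ξ ξ' c y / ξ y ^ 2) y :=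
  (((hasDerivAt_id y).sub_const c).div hd hξ).congr_deriv (by simp [ratioDerivNumerator])

theorem hasDerivAt_ratioDerivNumerator (hd1 : HasDerivAt ξ (ξ' y) y)
    (hd2 : HasDerivAt ξ' (ξ'' y) y) :
    HasDerivAt (ratioDerivNumerator ξ ξ' c) (-((y - c) * ξ'' y)) y :=
  (hd1.sub (((hasDerivAt_id y).sub_const c).mul hd2)).congr_deriv (by simp only [id]; ring)

theorem ratioDerivNumerator_eq_zero_of_isLocalMax (hd : HasDerivAt ξ (ξ' y) y) (hξ : ξ y ≠ 0)
    (hmax : IsLocalMax (fun y => (y - c) / ξ y) y) : ratioDerivNumerator ξ ξ' c y = 0 :=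
  (div_eq_zero_iff.mp (hmax.hasDerivAt_eq_zero (hasDerivAt_sub_div hd hξ))).resolve_right
    (pow_ne_zero 2 hξ)

variable {a m : ℝ} (ham : a < m) (hcm : c ≤ m)
  (hd1 : ∀ y ∈ Ioi a, HasDerivAt ξ (ξ' y) y) (hd2 : ∀ y ∈ Ioi a, HasDerivAt ξ' (ξ'' y) y)
  (hξ : ∀ y ∈ Ioi a, ξ y ≠ 0) (hcrit : ratioDerivNumerator ξ ξ' c m = 0)
include ham hcm hd1 hd2 hξ hcrit

theorem strictAntiOn_sub_div_Ici (hconv : ∀ y ∈ Ioi m, 0 < ξ'' y) :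
    StrictAntiOn (fun y => (y - c) / ξ y) (Ici m) := by
  have hsub : Ici m ⊆ Ioi a := Ici_subset_Ioi.mpr ham
  have hG : StrictAntiOn (ratioDerivNumerator ξ ξ' c) (Ici m) := by
    refine strictAntiOn_of_forall_hasDerivAt_neg (convex_Ici m)
      (fun y hy => hasDerivAt_ratioDerivNumerator (hd1 y (hsub hy)) (hd2 y (hsub hy)))
      (fun y hy => ?_)
    rw [interior_Ici] at hy
    have := mul_pos (sub_pos.mpr (hcm.trans_lt hy)) (hconv y hy)
    linarith
  refine strictAntiOn_of_forall_hasDerivAt_neg (convex_Ici m)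
    (fun y hy => hasDerivAt_sub_div (hd1 y (hsub hy)) (hξ y (hsub hy))) (fun y hy => ?_)
  rw [interior_Ici] at hy
  have hGy : ratioDerivNumerator ξ ξ' c y < 0 := hcrit ▸ hG self_mem_Ici (mem_Ici.mpr hy.le) hy
  have := hξ y (hsub (mem_Ici.mpr hy.le))
  exact div_neg_of_neg_of_pos hGy (by positivity)

theorem monotoneOn_sub_div_Icc {b : ℝ} (hconc : ∀ y ∈ Icc m b, ξ'' y ≤ 0) :
    MonotoneOn (fun y => (y - c) / ξ y) (Icc m b) := by
  have hsub : Icc m b ⊆ Ioi a := Icc_subset_Ici_self.trans (Ici_subset_Ioi.mpr ham)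
  have hG : MonotoneOn (ratioDerivNumerator ξ ξ' c) (Icc m b) := by
    refine monotoneOn_of_forall_hasDerivAt_nonneg (convex_Icc m b)
      (fun y hy => hasDerivAt_ratioDerivNumerator (hd1 y (hsub hy)) (hd2 y (hsub hy)))
      (fun y hy => ?_)
    have hy' := interior_subset hy
    have := mul_nonpos_of_nonneg_of_nonpos (sub_nonneg.mpr (hcm.trans hy'.1)) (hconc y hy')
    linarith
  refine monotoneOn_of_forall_hasDerivAt_nonneg (convex_Icc m b)
    (fun y hy => hasDerivAt_sub_div (hd1 y (hsub hy)) (hξ y (hsub hy))) (fun y hy => ?_)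
  have hy' := interior_subset hy
  have hGy : 0 ≤ ratioDerivNumerator ξ ξ' c y :=
    hcrit ▸ hG (left_mem_Icc.mpr (hy'.1.trans hy'.2)) hy' hy'.1
  exact div_nonneg hGy (sq_nonneg _)

end Ratio

theorem stmt0_general (y₀ y₂ K : ℝ)
    (ξ ξ' ξ'' : ℝ → ℝ)
    (hd1 : ∀ y ∈ Ici y₀, HasDerivAt ξ (ξ' y) y)
    (hd2 : ∀ y ∈ Ici y₀, HasDerivAt ξ' (ξ'' y) y)
    (hξpos : ∀ y > y₀, 0 < ξ y)
    (hconc : ∀ y ∈ Icc y₀ y₂, ξ'' y ≤ 0)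
    (hconv : ∀ y > y₂, 0 < ξ'' y)
    (k : ℝ → ℝ) (hk : ∀ y, k y = (y - y₀ - K) / ξ y)
    (hlim0 : Tendsto k (nhdsWithin y₀ (Ioi y₀)) atBot)
    (hliminfty : Tendsto k atTop (nhds 0))
    (hsomepos : ∃ y > y₀, 0 < k y) :
    ∃! yhat, yhat ∈ Ioi y₀ ∧ IsMaxOn k (Ioi y₀) yhat ∧
      max (y₀ + K) y₂ ≤ yhat ∧ StrictAntiOn k (Ioi yhat) := by
  obtain rfl : k = fun y => (y - (y₀ + K)) / ξ y := funext fun y => by rw [hk, sub_sub]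
  set k : ℝ → ℝ := fun y => (y - (y₀ + K)) / ξ y
  have hd1' : ∀ y ∈ Ioi y₀, HasDerivAt ξ (ξ' y) y := fun y hy => hd1 y (mem_Ici_of_Ioi hy)
  have hd2' : ∀ y ∈ Ioi y₀, HasDerivAt ξ' (ξ'' y) y := fun y hy => hd2 y (mem_Ici_of_Ioi hy)
  have hξne : ∀ y ∈ Ioi y₀, ξ y ≠ 0 := fun y hy => (hξpos y hy).ne'
  obtain ⟨x, hx, hkx⟩ := hsomepos
  obtain ⟨m, hm, hmax⟩ := exists_isMaxOn_Ioi_of_tendsto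
    (fun y hy => (hasDerivAt_sub_div (hd1' y hy) (hξne y hy)).continuousAt.continuousWithinAt)
    hlim0 hliminfty hx hkx
  have hc_lt : ∀ {m}, m ∈ Ioi y₀ → IsMaxOn k (Ioi y₀) m → y₀ + K < m := fun hm hmax =>
    sub_pos.mp ((div_pos_iff_of_pos_right (hξpos _ hm)).mp (hkx.trans_le (hmax hx)))
  have hcrit : ∀ {m}, m ∈ Ioi y₀ → IsMaxOn k (Ioi y₀) m → ratioDerivNumerator ξ ξ' (y₀ + K) m = 0 :=
    fun hm hmax => ratioDerivNumerator_eq_zero_of_isLocalMax (hd1' _ hm) (hξne _ hm)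
      (hmax.isLocalMax (Ioi_mem_nhds hm))
  obtain ⟨M, hM, hMmax, hy₂M⟩ : ∃ M ∈ Ioi y₀, IsMaxOn k (Ioi y₀) M ∧ y₂ ≤ M := by
    rcases le_or_gt y₂ m with hy₂m | hmy₂
    · exact ⟨m, hm, hmax, hy₂m⟩
    have hmono := monotoneOn_sub_div_Icc hm (hc_lt hm hmax).le hd1' hd2' hξne (hcrit hm hmax)
      fun y hy => hconc y ⟨(mem_Ioi.mp hm).le.trans hy.1, hy.2⟩
    refine ⟨y₂, hm.trans hmy₂, isMaxOn_iff.mpr fun y hy => (isMaxOn_iff.mp hmax y hy).trans ?_,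
      le_rfl⟩
    exact hmono (left_mem_Icc.mpr hmy₂.le) (right_mem_Icc.mpr hmy₂.le) hmy₂.le
  have hanti := (strictAntiOn_sub_div_Ici hM (hc_lt hM hMmax).le hd1' hd2' hξne
    (hcrit hM hMmax) fun y hy => hconv y (hy₂M.trans_lt hy)).mono Ioi_subset_Ici_self
  refine ⟨M, ⟨hM, hMmax, max_le (hc_lt hM hMmax).le hy₂M, hanti⟩, ?_⟩
  rintro a ⟨ha, hamax, -, hanti'⟩
  exact le_antisymm (hamax.le_of_strictAntiOn_Ioi hanti (Ioi_subset_Ioi hM.le))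
    (hMmax.le_of_strictAntiOn_Ioi hanti' (Ioi_subset_Ioi ha.le))

theorem stmt0 (y₀ y₂ K : ℝ) (hy₀ : 0 < y₀) (hK : 0 ≤ K) (hy₂ : y₀ ≤ y₂)
    (ξ ξ' ξ'' : ℝ → ℝ)
    (hd1 : ∀ y ∈ Ici y₀, HasDerivAt ξ (ξ' y) y)
    (hd2 : ∀ y ∈ Ici y₀, HasDerivAt ξ' (ξ'' y) y)
    (hc2 : ContinuousOn ξ'' (Ici y₀))
    (hξ0 : ξ y₀ = 0)
    (hξpos : ∀ y > y₀, 0 < ξ y)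
    (hξ'pos : ∀ y > y₀, 0 < ξ' y)
    (hconc : ∀ y ∈ Icc y₀ y₂, ξ'' y ≤ 0)
    (hconv : ∀ y > y₂, 0 < ξ'' y)
    (k : ℝ → ℝ) (hk : ∀ y, k y = (y - y₀ - K) / ξ y)
    (hlim0 : Tendsto k (nhdsWithin y₀ (Ioi y₀)) atBot)
    (hliminfty : Tendsto k atTop (nhds 0))
    (hsomepos : ∃ y > y₀, 0 < k y) :
    ∃! yhat, yhat ∈ Ioi y₀ ∧ IsMaxOn k (Ioi y₀) yhat ∧
      max (y₀ + K) y₂ ≤ yhat ∧ StrictAntiOn k (Ioi yhat) :=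
  stmt0_general y₀ y₂ K ξ ξ' ξ'' hd1 hd2 hξpos hconc hconv k hk hlim0 hliminfty hsomepos
end

section
/- Under the hypotheses on ξ above (ξ(y₀) = 0, ξ, ξ' > 0 on (y₀,∞), ξ'' ≤ 0 on [y₀,y₂], ξ'' > 0 on (y₂,∞)), suppose for each K ≥ 0 that F_K(y) = ξ(y) − (y − y₀ − K)ξ'(y) has a unique root ŷ_K lying in [max{y₀+K, y₂}, ∞). Then the map K ↦ ŷ_K is strictly increasing: for 0 ≤ K₁ < K₂ one has ŷ_{K₁} < ŷ_{K₂}. -/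
open Set

/-! Write `F_K y = ξ y - (y - y₀ - K) ξ' y`. Its derivative is `-(y - y₀ - K) ξ'' y`, so `F_K` is
strictly decreasing to the right of `max (y₀ + K) y₂`. If `ŷ_{K₂} ≤ ŷ_{K₁}` for `K₁ < K₂`, then
`F_{K₂}(ŷ_{K₁}) = F_{K₁}(ŷ_{K₁}) + (K₂ - K₁) ξ'(ŷ_{K₁}) > 0 = F_{K₂}(ŷ_{K₂})`, contradicting
that monotonicity. -/

theorem HasDerivAt.sub_sub_mul {ξ ξ' ξ'' : ℝ → ℝ} {c y : ℝ} (h₁ : HasDerivAt ξ (ξ' y) y)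
    (h₂ : HasDerivAt ξ' (ξ'' y) y) :
    HasDerivAt (fun y => ξ y - (y - c) * ξ' y) (-(y - c) * ξ'' y) y :=
  (h₁.sub (((hasDerivAt_id y).sub_const c).mul h₂)).congr_deriv (by simp only [id]; ring)

theorem strictAntiOn_sub_sub_mul {ξ ξ' ξ'' : ℝ → ℝ} {b c : ℝ} (hcb : c ≤ b)
    (hd1 : ∀ y ∈ Ici b, HasDerivAt ξ (ξ' y) y) (hd2 : ∀ y ∈ Ici b, HasDerivAt ξ' (ξ'' y) y)
    (hconv : ∀ y > b, 0 < ξ'' y) :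
    StrictAntiOn (fun y => ξ y - (y - c) * ξ' y) (Ici b) := by
  have hder : ∀ y ∈ Ici b, HasDerivAt (fun y => ξ y - (y - c) * ξ' y) (-(y - c) * ξ'' y) y :=
    fun y hy => (hd1 y hy).sub_sub_mul (hd2 y hy)
  refine strictAntiOn_of_deriv_neg (convex_Ici b)
    (fun y hy => (hder y hy).continuousAt.continuousWithinAt) fun y hy => ?_
  rw [interior_Ici] at hy
  rw [(hder y (mem_Ici.2 (le_of_lt hy))).deriv, neg_mul, neg_neg_iff_pos]
  exact mul_pos (by linarith [mem_Ioi.1 hy]) (hconv y hy)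

theorem stmt2_general (y₀ y₂ : ℝ)
    (ξ ξ' ξ'' : ℝ → ℝ)
    (hd1 : ∀ y ∈ Ici y₀, HasDerivAt ξ (ξ' y) y)
    (hd2 : ∀ y ∈ Ici y₀, HasDerivAt ξ' (ξ'' y) y)
    (hξ'pos : ∀ y > y₀, 0 < ξ' y)
    (hconv : ∀ y > y₂, 0 < ξ'' y)
    (yhat : ℝ → ℝ)
    (hroot : ∀ K ≥ (0:ℝ), ξ (yhat K) - (yhat K - y₀ - K) * ξ' (yhat K) = 0)
    (hloc : ∀ K ≥ (0:ℝ), max (y₀ + K) y₂ ≤ yhat K) :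
    ∀ K₁ K₂ : ℝ, 0 ≤ K₁ → K₁ < K₂ → yhat K₁ < yhat K₂ := by
  intro K₁ K₂ hK₁ hK
  have hK₂ : 0 ≤ K₂ := by linarith
  obtain ⟨hb₀, hb₂⟩ := max_le_iff.mp (hloc K₂ hK₂)
  by_contra! hle
  have hpos : 0 < ξ' (yhat K₁) := hξ'pos _ (by linarith)
  have hanti := strictAntiOn_sub_sub_mul (c := y₀ + K₂) hb₀
    (fun y hy => hd1 y (mem_Ici.2 (by linarith [mem_Ici.1 hy])))
    (fun y hy => hd2 y (mem_Ici.2 (by linarith [mem_Ici.1 hy])))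
    (fun y hy => hconv y (lt_of_le_of_lt hb₂ hy))
  have hFle := hanti.antitoneOn self_mem_Ici (mem_Ici.2 hle) hle
  simp only [← sub_sub] at hFle
  linarith [hroot K₁ hK₁, hroot K₂ hK₂, mul_pos (sub_pos.2 hK) hpos]

theorem stmt2 (y₀ y₂ : ℝ) (hy₀ : 0 < y₀) (hy₂ : y₀ ≤ y₂)
    (ξ ξ' ξ'' : ℝ → ℝ)
    (hd1 : ∀ y ∈ Ici y₀, HasDerivAt ξ (ξ' y) y)
    (hd2 : ∀ y ∈ Ici y₀, HasDerivAt ξ' (ξ'' y) y)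
    (hξ0 : ξ y₀ = 0)
    (hξpos : ∀ y > y₀, 0 < ξ y)
    (hξ'pos : ∀ y > y₀, 0 < ξ' y)
    (hconc : ∀ y ∈ Icc y₀ y₂, ξ'' y ≤ 0)
    (hconv : ∀ y > y₂, 0 < ξ'' y)
    (yhat : ℝ → ℝ)
    (hroot : ∀ K ≥ (0:ℝ), ξ (yhat K) - (yhat K - y₀ - K) * ξ' (yhat K) = 0)
    (hloc : ∀ K ≥ (0:ℝ), max (y₀ + K) y₂ ≤ yhat K)
    (huniq : ∀ K ≥ (0:ℝ), ∀ y ∈ Ioi y₀, ξ y - (y - y₀ - K) * ξ' y = 0 → y = yhat K) :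
    ∀ K₁ K₂ : ℝ, 0 ≤ K₁ → K₁ < K₂ → yhat K₁ < yhat K₂ :=
  stmt2_general y₀ y₂ ξ ξ' ξ'' hd1 hd2 hξ'pos hconv yhat hroot hloc
end

section
/- Let μ : (0,∞) → ℝ be continuous and m : (0,∞) → (0,∞) be locally integrable, and define I(x) = ∫_0^x (μ(y) − μ(x)) m(y) dy (assumed finite for all x). If μ is differentiable, then I'(x) = −μ'(x)·∫_0^x m(y) dy. Consequently, if there is y₁ such that μ is increasing on (0, y₁] and strictly decreasing on [y₁, ∞), then I is decreasing on (0, y₁] and strictly increasing on [y₁, ∞), so I changes sign at most once, from nonpositive to positive. -/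
open Set intervalIntegral

/-!
For `0 < a, t` one has
`I t - I a = ∫ y in a..t, (μ y - μ t) * m y + (μ a - μ t) * ∫ y in 0..a, m y`.
When `μ` is monotone between `a` and `t`, both terms have the sign of `μ a - μ t`, which gives the
monotonicity of `I` on either side of `y₁`. As `t → a` the first term is `o(t - a)`: `μ` is
Lipschitz at `a` and `∫ y in a..t, |m y| → 0`. Hence `I` is differentiable although `m` need not
be continuous.
-/

section GapIntegral

open Filter Topology Asymptotics MeasureTheory
open scoped Interval

noncomputable def gapIntegral (μ m : ℝ → ℝ) (x : ℝ) : ℝ :=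
  ∫ y in (0:ℝ)..x, (μ y - μ x) * m y

lemma integral_nonneg_of_forall_Ioc {ν : Measure ℝ} {f : ℝ → ℝ} {a b : ℝ} (hab : a ≤ b)
    (hf : ∀ y ∈ Ioc a b, 0 ≤ f y) : 0 ≤ ∫ y in a..b, f y ∂ν := by
  rw [integral_of_le hab]
  exact setIntegral_nonneg measurableSet_Ioc hf

lemma integral_nonpos_of_forall_Ioc {ν : Measure ℝ} {f : ℝ → ℝ} {a b : ℝ} (hab : a ≤ b)
    (hf : ∀ y ∈ Ioc a b, f y ≤ 0) : ∫ y in a..b, f y ∂ν ≤ 0 := by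
  rw [integral_of_le hab]
  exact setIntegral_nonpos measurableSet_Ioc hf

lemma intervalIntegrable_sub_const_mul {μ m : ℝ → ℝ} {a b : ℝ} (c : ℝ)
    (hμm : IntervalIntegrable (fun y => μ y * m y) volume a b)
    (hm : IntervalIntegrable m volume a b) :
    IntervalIntegrable (fun y => (μ y - c) * m y) volume a b := by
  simpa only [sub_mul] using hμm.sub (hm.const_mul c)

lemma hasDerivAt_integral_sub_mul_zero {f m : ℝ → ℝ} {a b x : ℝ}
    (hf : (f · - f x) =O[𝓝 x] (· - x)) (hm : IntervalIntegrable m volume a b)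
    (hx : x ∈ Ioo a b) :
    HasDerivAt (fun t => ∫ y in x..t, (f y - f t) * m y) 0 x := by
  obtain ⟨C, hC0, hC⟩ := hf.exists_pos
  rw [isBigOWith_iff] at hC
  set G : ℝ → ℝ := fun t => ∫ y in x..t, ‖m y‖
  have habx : Ioo a b ⊆ [[a, b]] := Ioo_subset_Icc_self.trans Icc_subset_uIcc
  have hG : Tendsto G (𝓝 x) (𝓝 0) := by
    have := (continuousOn_primitive_interval' hm.norm (habx hx)).continuousAt
      (mem_of_superset (Ioo_mem_nhds hx.1 hx.2) habx)
    simpa [G] using this.tendsto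
  have hbound : ∀ᶠ t in 𝓝 x, ‖∫ y in x..t, (f y - f t) * m y‖ ≤ 2 * C * ‖(t - x) * G t‖ := by
    obtain ⟨l, u, hxlu, hlu⟩ := mem_nhds_iff_exists_Ioo_subset.1 (hC.and (Ioo_mem_nhds hx.1 hx.2))
    filter_upwards [Ioo_mem_nhds hxlu.1 hxlu.2] with t ht
    have hsub : [[x, t]] ⊆ Ioo l u := ordConnected_Ioo.uIcc_subset hxlu ht
    have hft : |f t - f x| ≤ C * |t - x| := (hlu ht).1
    have hpt : ∀ y ∈ Ι x t, ‖(f y - f t) * m y‖ ≤ 2 * C * |t - x| * ‖m y‖ := by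
      intro y hy
      have hyxt := uIoc_subset_uIcc hy
      have hfy : |f y - f x| ≤ C * |y - x| := (hlu (hsub hyxt)).1
      have hyx := mul_le_mul_of_nonneg_left (abs_sub_left_of_mem_uIcc hyxt) hC0.le
      rw [norm_mul, Real.norm_eq_abs (f y - f t)]
      gcongr
      linarith [abs_sub_le (f y) (f x) (f t), abs_sub_comm (f x) (f t)]
    have hmxt : IntervalIntegrable (fun y => ‖m y‖) volume x t :=
      hm.norm.mono_set (uIcc_subset_uIcc (habx hx) (habx (hlu ht).2))
    calc ‖∫ y in x..t, (f y - f t) * m y‖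
        ≤ |∫ y in x..t, 2 * C * |t - x| * ‖m y‖| :=
          norm_integral_le_abs_of_norm_le (ae_restrict_of_forall_mem measurableSet_uIoc hpt)
            (hmxt.const_mul _)
      _ = 2 * C * ‖(t - x) * G t‖ := by
          rw [intervalIntegral.integral_const_mul, abs_mul, norm_mul, abs_of_nonneg (by positivity)]
          simp only [G, Real.norm_eq_abs]
          ring
  rw [hasDerivAt_iff_isLittleO]
  simp only [integral_same, smul_zero, sub_zero]
  refine (IsBigO.of_bound _ hbound).trans_isLittleO ?_
  simpa using (isBigO_refl (fun t => t - x) (𝓝 x)).mul_isLittleO (isLittleO_one_iff ℝ |>.2 hG)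

variable {μ m : ℝ → ℝ}

lemma gapIntegral_sub_gapIntegral {a t : ℝ}
    (hμm : ∀ x > 0, IntervalIntegrable (fun y => μ y * m y) volume 0 x)
    (hm : ∀ x > 0, IntervalIntegrable m volume 0 x) (ha : 0 < a) (ht : 0 < t) :
    gapIntegral μ m t - gapIntegral μ m a =
      (∫ y in a..t, (μ y - μ t) * m y) + (μ a - μ t) * ∫ y in (0:ℝ)..a, m y := by
  have h0a := intervalIntegrable_sub_const_mul (μ t) (hμm a ha) (hm a ha)
  have hat := intervalIntegrable_sub_const_mul (μ t) ((hμm a ha).symm.trans (hμm t ht))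
    ((hm a ha).symm.trans (hm t ht))
  have hshift : (∫ y in (0:ℝ)..a, (μ y - μ t) * m y) - gapIntegral μ m a =
      (μ a - μ t) * ∫ y in (0:ℝ)..a, m y := by
    rw [gapIntegral, ← integral_sub h0a (intervalIntegrable_sub_const_mul (μ a) (hμm a ha)
      (hm a ha)), ← intervalIntegral.integral_const_mul]
    congr 1
    ext y
    ring
  have hsplit := integral_add_adjacent_intervals h0a hat
  unfold gapIntegral at hshift ⊢
  linarith

lemma hasDerivAt_gapIntegral {μ' x : ℝ}
    (hμm : ∀ x > 0, IntervalIntegrable (fun y => μ y * m y) volume 0 x)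
    (hm : ∀ x > 0, IntervalIntegrable m volume 0 x) (hμ : HasDerivAt μ μ' x) (hx : 0 < x) :
    HasDerivAt (gapIntegral μ m) (-μ' * ∫ y in (0:ℝ)..x, m y) x := by
  have hrem := hasDerivAt_integral_sub_mul_zero hμ.isBigO_sub
    ((hm (x / 2) (by positivity)).symm.trans (hm (2 * x) (by positivity)))
    ⟨by linarith, by linarith⟩
  have hlin := (hμ.const_sub (μ x)).mul_const (∫ y in (0:ℝ)..x, m y)
  have hsum := (hrem.add hlin).const_add (gapIntegral μ m x)
  simp only [zero_add, neg_mul] at hsum ⊢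
  refine hsum.congr_of_eventuallyEq ?_
  filter_upwards [Ioi_mem_nhds hx] with t ht
  simp only [Pi.add_apply]
  linarith [gapIntegral_sub_gapIntegral hμm hm hx ht]

lemma antitoneOn_gapIntegral {s : Set ℝ} (hs : s ⊆ Ioi 0) (hsc : s.OrdConnected)
    (hμm : ∀ x > 0, IntervalIntegrable (fun y => μ y * m y) volume 0 x)
    (hm : ∀ x > 0, IntervalIntegrable m volume 0 x) (hm0 : ∀ x > 0, 0 ≤ m x)
    (hμ : MonotoneOn μ s) : AntitoneOn (gapIntegral μ m) s := by
  intro a ha b hb hab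
  have hrem : ∫ y in a..b, (μ y - μ b) * m y ≤ 0 :=
    integral_nonpos_of_forall_Ioc hab fun y hy =>
      have hys := hsc.out ha hb (Ioc_subset_Icc_self hy)
      mul_nonpos_of_nonpos_of_nonneg (sub_nonpos.2 (hμ hys hb hy.2)) (hm0 y (hs hys))
  have hlin : (μ a - μ b) * ∫ y in (0:ℝ)..a, m y ≤ 0 :=
    mul_nonpos_of_nonpos_of_nonneg (sub_nonpos.2 (hμ ha hb hab))
      (integral_nonneg_of_forall_Ioc (hs ha).le fun y hy => hm0 y hy.1)
  linarith [gapIntegral_sub_gapIntegral hμm hm (hs ha) (hs hb)]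

lemma strictMonoOn_gapIntegral {s : Set ℝ} (hs : s ⊆ Ioi 0) (hsc : s.OrdConnected)
    (hμm : ∀ x > 0, IntervalIntegrable (fun y => μ y * m y) volume 0 x)
    (hm : ∀ x > 0, IntervalIntegrable m volume 0 x) (hmpos : ∀ x > 0, 0 < m x)
    (hμ : StrictAntiOn μ s) : StrictMonoOn (gapIntegral μ m) s := by
  intro a ha b hb hab
  have hrem : 0 ≤ ∫ y in a..b, (μ y - μ b) * m y :=
    integral_nonneg_of_forall_Ioc hab.le fun y hy =>
      have hys := hsc.out ha hb (Ioc_subset_Icc_self hy)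
      mul_nonneg (sub_nonneg.2 (hμ.antitoneOn hys hb hy.2)) (hmpos y (hs hys)).le
  have hlin : 0 < (μ a - μ b) * ∫ y in (0:ℝ)..a, m y :=
    mul_pos (sub_pos.2 (hμ ha hb hab))
      (intervalIntegral_pos_of_pos_on (hm a (hs ha)) (fun y hy => hmpos y hy.1) (hs ha))
  linarith [gapIntegral_sub_gapIntegral hμm hm (hs ha) (hs hb)]

lemma gapIntegral_nonpos {x : ℝ} (hx : 0 ≤ x) (hm0 : ∀ y > 0, 0 ≤ m y)
    (hμ : MonotoneOn μ (Ioc 0 x)) : gapIntegral μ m x ≤ 0 :=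
  integral_nonpos_of_forall_Ioc hx fun y hy =>
    mul_nonpos_of_nonpos_of_nonneg (sub_nonpos.2 (hμ hy ⟨hy.1.trans_le hy.2, le_rfl⟩ hy.2))
      (hm0 y hy.1)

end GapIntegral

theorem stmt4_general (y₁ : ℝ) (hy₁ : 0 < y₁)
    (μ μ' m : ℝ → ℝ)
    (hmpos : ∀ x > (0:ℝ), 0 < m x)
    (hmint : ∀ x > (0:ℝ), IntervalIntegrable m MeasureTheory.volume 0 x)
    (hμmint : ∀ x > (0:ℝ), IntervalIntegrable (fun y => μ y * m y) MeasureTheory.volume 0 x)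
    (hμ' : ∀ x > (0:ℝ), HasDerivAt μ (μ' x) x)
    (I : ℝ → ℝ)
    (hI : ∀ x, I x = ∫ y in (0:ℝ)..x, (μ y - μ x) * m y)
    (hμmono : MonotoneOn μ (Ioc 0 y₁))
    (hμanti : StrictAntiOn μ (Ici y₁)) :
    (∀ x > (0:ℝ), HasDerivAt I (-(μ' x) * ∫ y in (0:ℝ)..x, m y) x) ∧
    AntitoneOn I (Ioc 0 y₁) ∧ StrictMonoOn I (Ici y₁) ∧
    (∀ x₀ > (0:ℝ), 0 < I x₀ → ∀ x ≥ x₀, 0 < I x) := by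
  obtain rfl : I = gapIntegral μ m := funext hI
  have hm0 : ∀ x > (0:ℝ), 0 ≤ m x := fun x hx => (hmpos x hx).le
  have hmono := strictMonoOn_gapIntegral (Ici_subset_Ioi.2 hy₁) ordConnected_Ici hμmint hmint
    hmpos hμanti
  refine ⟨fun x hx => hasDerivAt_gapIntegral hμmint hmint (hμ' x hx) hx,
    antitoneOn_gapIntegral Ioc_subset_Ioi_self ordConnected_Ioc hμmint hmint hm0 hμmono, hmono,
    fun x₀ hx₀ hpos x hx => ?_⟩
  have hy₁x₀ : y₁ < x₀ := by
    by_contra! h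
    exact hpos.not_ge (gapIntegral_nonpos hx₀.le hm0 (hμmono.mono (Ioc_subset_Ioc_right h)))
  exact hpos.trans_le (hmono.monotoneOn hy₁x₀.le (hy₁x₀.le.trans hx) hx)

theorem stmt4 (y₁ : ℝ) (hy₁ : 0 < y₁)
    (μ μ' m : ℝ → ℝ)
    (hμc : ContinuousOn μ (Ioi 0))
    (hmpos : ∀ x > (0:ℝ), 0 < m x)
    (hmint : ∀ x > (0:ℝ), IntervalIntegrable m MeasureTheory.volume 0 x)
    (hμmint : ∀ x > (0:ℝ), IntervalIntegrable (fun y => μ y * m y) MeasureTheory.volume 0 x)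
    (hμ' : ∀ x > (0:ℝ), HasDerivAt μ (μ' x) x)
    (I : ℝ → ℝ)
    (hI : ∀ x, I x = ∫ y in (0:ℝ)..x, (μ y - μ x) * m y)
    (hμmono : MonotoneOn μ (Ioc 0 y₁))
    (hμanti : StrictAntiOn μ (Ici y₁)) :
    (∀ x > (0:ℝ), HasDerivAt I (-(μ' x) * ∫ y in (0:ℝ)..x, m y) x) ∧
    AntitoneOn I (Ioc 0 y₁) ∧ StrictMonoOn I (Ici y₁) ∧
    (∀ x₀ > (0:ℝ), 0 < I x₀ → ∀ x ≥ x₀, 0 < I x) :=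
  stmt4_general y₁ hy₁ μ μ' m hmpos hmint hμmint hμ' I hI hμmono hμanti
end

section
/- Let G : (y₀, ∞) × (y₀, ∞) → ℝ be such that G(x, ·) is strictly decreasing whenever the induced rate is, in the following precise sense: there is a strictly decreasing map c on (ŷ, ∞) and G(x₁, x₂) = H(x₁, c(x₂)) with H(x, ·) strictly decreasing for every x. Let y^g, y^p > ŷ satisfy: (i) G(x, y^g) ≤ G(y^g, y^g) for all x (equilibrium property) and (ii) G(y^p, y^p) ≥ G(x, x) for all x (social optimality). Then y^p ≥ y^g. -/
open Set

theorem stmt9 (y₀ yhat : ℝ) (hy : y₀ ≤ yhat)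
    (G H : ℝ → ℝ → ℝ) (c : ℝ → ℝ)
    (hc : StrictAntiOn c (Ioi yhat))
    (hGH : ∀ x₁ x₂, G x₁ x₂ = H x₁ (c x₂))
    (hH : ∀ x, StrictAnti (H x))
    (yg yp : ℝ) (hyg : yg ∈ Ioi yhat) (hyp : yp ∈ Ioi yhat)
    (heq : ∀ x ∈ Ioi y₀, G x yg ≤ G yg yg)
    (hopt : ∀ x ∈ Ioi y₀, G x x ≤ G yp yp) :
    yg ≤ yp := by
  by_contra h
  push_neg at h
  have hcc : c yg < c yp := hc hyp hyg h
  have h1 : G yp yp < G yp yg := by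
    rw [hGH, hGH]; exact hH yp hcc
  have h2 : G yp yg ≤ G yg yg := heq yp (lt_of_le_of_lt hy hyp)
  have h3 : G yg yg ≤ G yp yp := hopt yg (lt_of_le_of_lt hy hyg)
  linarith
end

section
/- Let G : I × I → ℝ (I ⊆ ℝ an interval) be such that G(x, ·) is strictly decreasing in the second argument for every fixed x. Suppose y^g ∈ I satisfies G(x, y^g) ≤ G(y^g, y^g) for all x ∈ I, and y^p ∈ I satisfies G(x, x) ≤ G(y^p, y^p) for all x ∈ I. Then y^p ≤ y^g. -/
open Set

theorem stmt10 (I : Set ℝ) (hI : I.OrdConnected)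
    (G : ℝ → ℝ → ℝ)
    (hanti : ∀ x, StrictAntiOn (G x) I)
    (yg yp : ℝ) (hyg : yg ∈ I) (hyp : yp ∈ I)
    (heq : ∀ x ∈ I, G x yg ≤ G yg yg)
    (hopt : ∀ x ∈ I, G x x ≤ G yp yp) :
    yp ≤ yg := by
  by_contra h
  push_neg at h
  have h1 : G yg yg ≤ G yp yp := hopt yg hyg
  have h2 : G yp yp < G yp yg := hanti yp hyg hyp h
  have h3 : G yp yg ≤ G yg yg := heq yp hyp
  linarith
end

section
/- Let ξ satisfy ξ(y₀) = 0, ξ, ξ' > 0 on (y₀, ∞), with ξ'' ≤ 0 on [y₀, y₂] and ξ'' > 0 on (y₂, ∞). For K₁ ≥ 0 let ŷ₁ ∈ [max{y₂, y₀ + K₁}, ∞) satisfy ξ(ŷ₁) − (ŷ₁ − y₀ − K₁)ξ'(ŷ₁) = 0, and let φ : [z₁, z₂] → (0, ∞) be strictly decreasing. Then for z < z' in [z₁, z₂], the unique maximizers y(z), y(z') of y ↦ (φ(z)(y − y₀) − K)/ξ(y) (equivalently of (y − y₀ − K/φ(z))/ξ(y)) satisfy y(z) ≤ y(z'); i.e.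 the best-response threshold is increasing in the market rate z. -/
/-!
Write the objective as `φ z * u y - K / ξ y` with `u y = (y - y₀) / ξ y`. Adding the two optimality
inequalities for prices `p' < p` (revealed preference) shows that the maximizer for the larger price
has the larger `u`, and then the optimality for `p' ≥ 0` shows that it also has the larger cost
`K / ξ`, i.e. the smaller `ξ`. Since `ξ` is increasing and `φ` is decreasing, `g z ≤ g z'`.
-/

open Set

section RevealedPreference

variable {α : Type*} {S : Set α} {u c : α → ℝ} {p p' : ℝ} {a b : α}

theorem le_of_isMaxOn_mul_sub_of_lt (hp : p' < p)
    (ha : IsMaxOn (fun y => p * u y - c y) S a) (hb : IsMaxOn (fun y => p' * u y - c y) S b)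
    (haS : a ∈ S) (hbS : b ∈ S) : u b ≤ u a := by
  have hpa : p * u b - c b ≤ p * u a - c a := ha hbS
  have hpb : p' * u a - c a ≤ p' * u b - c b := hb haS
  nlinarith

theorem cost_le_of_isMaxOn_mul_sub_of_lt (hp : p' < p) (hp' : 0 ≤ p')
    (ha : IsMaxOn (fun y => p * u y - c y) S a) (hb : IsMaxOn (fun y => p' * u y - c y) S b)
    (haS : a ∈ S) (hbS : b ∈ S) : c b ≤ c a := by
  have hu : u b ≤ u a := le_of_isMaxOn_mul_sub_of_lt hp ha hb haS hbS
  have hpb : p' * u a - c a ≤ p' * u b - c b := hb haS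
  nlinarith [mul_le_mul_of_nonneg_left hu hp']

end RevealedPreference

theorem strictMonoOn_of_hasDerivAt_pos {D : Set ℝ} (hD : Convex ℝ D) (hDo : IsOpen D)
    {f f' : ℝ → ℝ} (hf : ∀ y ∈ D, HasDerivAt f (f' y) y) (hf' : ∀ y ∈ D, 0 < f' y) :
    StrictMonoOn f D := by
  refine strictMonoOn_of_deriv_pos hD (fun y hy => (hf y hy).continuousAt.continuousWithinAt) ?_
  intro y hy
  rw [hDo.interior_eq] at hy
  rw [(hf y hy).deriv]
  exact hf' y hy

theorem stmt15_general (y₀ K z₁ z₂ : ℝ) (hK : 0 < K)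
    (ξ ξ' : ℝ → ℝ)
    (hd1 : ∀ y ∈ Ici y₀, HasDerivAt ξ (ξ' y) y)
    (hξpos : ∀ y > y₀, 0 < ξ y)
    (hξ'pos : ∀ y > y₀, 0 < ξ' y)
    (φ : ℝ → ℝ) (hφpos : ∀ z ∈ Icc z₁ z₂, 0 < φ z)
    (hφanti : StrictAntiOn φ (Icc z₁ z₂))
    (g : ℝ → ℝ)
    (hg : ∀ z ∈ Icc z₁ z₂, g z ∈ Ioi y₀ ∧
      IsMaxOn (fun y => (φ z * (y - y₀) - K) / ξ y) (Ioi y₀) (g z) ∧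
      ∀ y' ∈ Ioi y₀, IsMaxOn (fun y => (φ z * (y - y₀) - K) / ξ y) (Ioi y₀) y' → y' = g z) :
    ∀ z ∈ Icc z₁ z₂, ∀ z' ∈ Icc z₁ z₂, z < z' → g z ≤ g z' := by
  intro z hz z' hz' hzz'
  obtain ⟨ha, hamax, -⟩ := hg z hz
  obtain ⟨hb, hbmax, -⟩ := hg z' hz'
  have hobj : ∀ p : ℝ, (fun y => (p * (y - y₀) - K) / ξ y) =
      fun y => p * ((y - y₀) / ξ y) - K * (ξ y)⁻¹ := fun p => funext fun y => by ring
  rw [hobj] at hamax hbmax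
  have hcost : K * (ξ (g z'))⁻¹ ≤ K * (ξ (g z))⁻¹ :=
    cost_le_of_isMaxOn_mul_sub_of_lt (u := fun y => (y - y₀) / ξ y) (c := fun y => K * (ξ y)⁻¹)
      (hφanti hz hz' hzz') (hφpos z' hz').le hamax hbmax ha hb
  have hξ : ξ (g z) ≤ ξ (g z') :=
    (inv_le_inv₀ (hξpos _ hb) (hξpos _ ha)).1 (le_of_mul_le_mul_left hcost hK)
  have hmono : StrictMonoOn ξ (Ioi y₀) := strictMonoOn_of_hasDerivAt_pos (convex_Ioi y₀)
    isOpen_Ioi (fun y hy => hd1 y (Ioi_subset_Ici_self hy)) hξ'pos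
  exact (hmono.le_iff_le ha hb).1 hξ

theorem stmt15 (y₀ y₂ K z₁ z₂ : ℝ) (hy₀ : 0 < y₀) (hy₂ : y₀ ≤ y₂) (hK : 0 < K)
    (hz : z₁ ≤ z₂)
    (ξ ξ' ξ'' : ℝ → ℝ)
    (hd1 : ∀ y ∈ Ici y₀, HasDerivAt ξ (ξ' y) y)
    (hd2 : ∀ y ∈ Ici y₀, HasDerivAt ξ' (ξ'' y) y)
    (hξ0 : ξ y₀ = 0)
    (hξpos : ∀ y > y₀, 0 < ξ y)
    (hξ'pos : ∀ y > y₀, 0 < ξ' y)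
    (hconc : ∀ y ∈ Icc y₀ y₂, ξ'' y ≤ 0)
    (hconv : ∀ y > y₂, 0 < ξ'' y)
    (K₁ : ℝ) (hK₁ : 0 ≤ K₁) (yhat₁ : ℝ)
    (hyhat₁mem : max y₂ (y₀ + K₁) ≤ yhat₁)
    (hyhat₁root : ξ yhat₁ - (yhat₁ - y₀ - K₁) * ξ' yhat₁ = 0)
    (φ : ℝ → ℝ) (hφpos : ∀ z ∈ Icc z₁ z₂, 0 < φ z)
    (hφanti : StrictAntiOn φ (Icc z₁ z₂))
    (g : ℝ → ℝ)
    (hg : ∀ z ∈ Icc z₁ z₂, g z ∈ Ioi y₀ ∧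
      IsMaxOn (fun y => (φ z * (y - y₀) - K) / ξ y) (Ioi y₀) (g z) ∧
      ∀ y' ∈ Ioi y₀, IsMaxOn (fun y => (φ z * (y - y₀) - K) / ξ y) (Ioi y₀) y' → y' = g z) :
    ∀ z ∈ Icc z₁ z₂, ∀ z' ∈ Icc z₁ z₂, z < z' → g z ≤ g z' :=
  stmt15_general y₀ K z₁ z₂ hK ξ ξ' hd1 hξpos hξ'pos φ hφpos hφanti g hg
end
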